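/- arXiv:1710.00263 — 2 statements merged into one kernel-verified Lean document; each statement's English description precedes it below -/
import Mathlib

section
/- Let U ⊂ ℝ^n be an open bounded set satisfying the cone condition. Then there exists a constant C₀ ∈ (0,1) such that for every y ∈ U and every r ∈ (0, diam U), the Lebesgue measure H^n(U ∩ B(y,r)) ≥ C₀·ω_n·r^n. -/
open MeasureTheory Metric Pointwise
open scoped RealInnerProductSpace ENNReal

/-- The open cone with vertex `0`, unit axis direction `u`, aperture `a` and height `h`. -/
def coneSet {n : ℕ} (u : EuclideanSpace ℝ (Fin n)) (a h : ℝ) :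
    Set (EuclideanSpace ℝ (Fin n)) :=
  {x | 0 < ⟪x, u⟫ ∧ ⟪x, u⟫ < h ∧ ‖x - ⟪x, u⟫ • u‖ < a * ⟪x, u⟫}

/-- The cone condition: the boundary of `U` is covered by finitely many bounded open
sets `V i`, and attaching a rotated copy (axis `u i`) of a fixed cone `K_h` to any point
of `U ∩ V i` stays inside `U`. -/
def ConeCondition {n : ℕ} (U : Set (EuclideanSpace ℝ (Fin n))) : Prop :=
  ∃ (a h : ℝ), 0 < a ∧ 0 < h ∧
    ∃ (m : ℕ) (V : Fin m → Set (EuclideanSpace ℝ (Fin n)))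
      (u : Fin m → EuclideanSpace ℝ (Fin n)),
      (∀ i, IsOpen (V i) ∧ Bornology.IsBounded (V i) ∧ ‖u i‖ = 1) ∧
      frontier U ⊆ ⋃ i, V i ∧
      ∀ i, (U ∩ V i) + coneSet (u i) a h ⊆ U

lemma isOpen_coneSet {n : ℕ} (u : EuclideanSpace ℝ (Fin n)) (a h : ℝ) :
    IsOpen (coneSet u a h) := by
  have hc : Continuous fun x : EuclideanSpace ℝ (Fin n) => ⟪x, u⟫ :=
    continuous_id.inner continuous_const
  have hc2 : Continuous fun x : EuclideanSpace ℝ (Fin n) => ‖x - ⟪x, u⟫ • u‖ :=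
    (continuous_id.sub (hc.smul continuous_const)).norm
  have heq : coneSet u a h = {x : EuclideanSpace ℝ (Fin n) | 0 < ⟪x, u⟫} ∩
      ({x | ⟪x, u⟫ < h} ∩ {x | ‖x - ⟪x, u⟫ • u‖ < a * ⟪x, u⟫}) := by
    ext x; simp only [coneSet, Set.mem_setOf_eq, Set.mem_inter_iff]
  rw [heq]
  exact (isOpen_lt continuous_const hc).inter
    ((isOpen_lt hc continuous_const).inter (isOpen_lt hc2 (continuous_const.mul hc)))

lemma smul_mem_coneSet {n : ℕ} (u : EuclideanSpace ℝ (Fin n)) (hu : ‖u‖ = 1)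
    {a h : ℝ} (ha : 0 < a) (hh : 0 < h) : (h / 2) • u ∈ coneSet u a h := by
  have h1 : ⟪((h / 2 : ℝ) • u : EuclideanSpace ℝ (Fin n)), u⟫ = h / 2 := by
    rw [real_inner_smul_left, real_inner_self_eq_norm_sq, hu]; ring
  refine ⟨?_, ?_, ?_⟩ <;> simp only [coneSet, Set.mem_setOf_eq, h1]
  · linarith
  · linarith
  · simp only [sub_self, norm_zero]
    positivity

lemma coneSet_mono {n : ℕ} (u : EuclideanSpace ℝ (Fin n)) {a t h : ℝ} (hth : t ≤ h) :
    coneSet u a t ⊆ coneSet u a h :=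
  fun _ ⟨p, q, r⟩ => ⟨p, lt_of_lt_of_le q hth, r⟩

lemma smul_coneSet_subset {n : ℕ} (u : EuclideanSpace ℝ (Fin n)) {a t : ℝ} (ht : 0 < t) :
    t • coneSet u a 1 ⊆ coneSet u a t := by
  rintro x ⟨z, ⟨h1, h2, h3⟩, rfl⟩
  have hip : ⟪(t • z : EuclideanSpace ℝ (Fin n)), u⟫ = t * ⟪z, u⟫ := real_inner_smul_left _ _ _
  refine ⟨?_, ?_, ?_⟩
  · rw [hip]; positivity
  · rw [hip]; nlinarith
  · rw [hip]
    have he : (t • z : EuclideanSpace ℝ (Fin n)) - (t * ⟪z, u⟫) • u = t • (z - ⟪z, u⟫ • u) := by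
      rw [smul_sub, smul_smul]
    rw [he, norm_smul, Real.norm_eq_abs, abs_of_pos ht]
    nlinarith

lemma coneSet_subset_closedBall {n : ℕ} (u : EuclideanSpace ℝ (Fin n)) (hu : ‖u‖ = 1)
    {a t : ℝ} (ha : 0 < a) :
    coneSet u a t ⊆ closedBall 0 ((1 + a) * t) := by
  rintro x ⟨h1, h2, h3⟩
  simp only [mem_closedBall, dist_zero_right]
  have hx : ‖x‖ ≤ ‖x - ⟪x, u⟫ • u‖ + ‖(⟪x, u⟫ • u : EuclideanSpace ℝ (Fin n))‖ := by
    calc ‖x‖ = ‖(x - ⟪x, u⟫ • u) + ⟪x, u⟫ • u‖ := by rw [sub_add_cancel]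
    _ ≤ _ := norm_add_le _ _
  rw [norm_smul, hu, mul_one, Real.norm_eq_abs, abs_of_pos h1] at hx
  nlinarith

/-- An open bounded set satisfying the cone condition has the lower volume density
bound `H^n(U ∩ B(y,r)) ≥ C₀·ω_n·r^n` for `y ∈ U` and `0 < r < diam U`. -/
theorem volume_inter_closedBall_ge {n : ℕ} (U : Set (EuclideanSpace ℝ (Fin n)))
    (hUo : IsOpen U) (hUb : Bornology.IsBounded U) (hUc : ConeCondition U) :
    ∃ C₀ : ℝ, C₀ ∈ Set.Ioo (0 : ℝ) 1 ∧
      ∀ y ∈ U, ∀ r : ℝ, 0 < r → r < Metric.diam U →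
        ENNReal.ofReal
            (C₀ * (volume (ball (0 : EuclideanSpace ℝ (Fin n)) 1)).toReal * r ^ n) ≤
          volume (U ∩ closedBall y r) := by
  classical
  rcases Nat.eq_zero_or_pos n with hn | hn
  · refine ⟨1 / 2, ⟨by norm_num, by norm_num⟩, fun y hy r hr hrD => absurd hrD (not_lt.2 ?_)⟩
    subst hn
    haveI : Subsingleton (EuclideanSpace ℝ (Fin 0)) := inferInstance
    have : Metric.diam U = 0 := Metric.diam_subsingleton (Set.subsingleton_of_subsingleton)
    linarith
  haveI : Nontrivial (EuclideanSpace ℝ (Fin n)) :=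
    Module.nontrivial_of_finrank_pos (R := ℝ) (by rw [finrank_euclideanSpace_fin]; omega)
  obtain ⟨a, h, ha, hh, m, V, u, hV, hcov, hcone⟩ := hUc
  -- a uniform positive lower bound on the volumes of the unit cones
  obtain ⟨cR, hcR, hcle⟩ :
      ∃ cR : ℝ, 0 < cR ∧ ∀ i, ENNReal.ofReal cR ≤ volume (coneSet (u i) a 1) := by
    rcases isEmpty_or_nonempty (Fin m) with hm | hm
    · exact ⟨1, one_pos, fun i => (hm.false i).elim⟩
    · have hfin : ∀ i, volume (coneSet (u i) a 1) ≠ ⊤ := fun i =>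
        ((measure_mono (coneSet_subset_closedBall _ (hV i).2.2 ha)).trans_lt
          measure_closedBall_lt_top).ne
      have hpos : ∀ i, 0 < volume (coneSet (u i) a 1) := fun i =>
        (isOpen_coneSet _ _ _).measure_pos volume
          ⟨_, smul_mem_coneSet _ (hV i).2.2 ha one_pos⟩
      obtain ⟨i₀, -, hi₀⟩ := Finset.exists_min_image Finset.univ
        (fun i => (volume (coneSet (u i) a 1)).toReal) ⟨hm.some, Finset.mem_univ _⟩
      refine ⟨_, ENNReal.toReal_pos (hpos i₀).ne' (hfin i₀), fun i => ?_⟩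
      calc ENNReal.ofReal ((volume (coneSet (u i₀) a 1)).toReal)
          ≤ ENNReal.ofReal ((volume (coneSet (u i) a 1)).toReal) :=
            ENNReal.ofReal_le_ofReal (hi₀ i (Finset.mem_univ i))
        _ = volume (coneSet (u i) a 1) := ENNReal.ofReal_toReal (hfin i)
  -- interior safety radius ε
  have hUcl : IsCompact (closure U) := hUb.isCompact_closure
  set K := closure U \ ⋃ i, V i with hK
  have hKc : IsCompact K := hUcl.diff (isOpen_iUnion fun i => (hV i).1)
  have hKU : K ⊆ U := by
    rintro x ⟨hx1, hx2⟩
    have hxf : x ∉ frontier U := fun hf => hx2 (hcov hf)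
    have hxi : x ∈ interior U := by
      by_contra h'
      exact hxf ⟨hx1, h'⟩
    rwa [hUo.interior_eq] at hxi
  obtain ⟨ε, hε, hεsub⟩ := hKc.exists_cthickening_subset_open hUo hKU
  have hball : ∀ x ∈ K, ball x ε ⊆ U := fun x hx =>
    ((ball_subset_thickening hx ε).trans (Metric.thickening_subset_cthickening _ _)).trans hεsub
  -- constants
  have hω_pos : (0 : ℝ≥0∞) < volume (ball (0 : EuclideanSpace ℝ (Fin n)) 1) :=
    measure_ball_pos _ _ one_pos
  have hω_ne : volume (ball (0 : EuclideanSpace ℝ (Fin n)) 1) ≠ ⊤ := measure_ball_lt_top.ne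
  set ω := (volume (ball (0 : EuclideanSpace ℝ (Fin n)) 1)).toReal with hω
  have hωR : 0 < ω := ENNReal.toReal_pos hω_pos.ne' hω_ne
  set D := Metric.diam U with hD
  have hD1 : (0 : ℝ) < max D 1 := lt_max_of_lt_right one_pos
  have h1a : (0 : ℝ) < 1 + a := by linarith
  set s := min (min h ε / max D 1) (1 / (1 + a)) with hs
  have hs_pos : 0 < s := lt_min (div_pos (lt_min hh hε) hD1) (by positivity)
  have hs_le : s ≤ 1 / (1 + a) := min_le_right _ _
  set γ := min cR ω with hγdef
  have hγ : 0 < γ := lt_min hcR hωR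
  refine ⟨min (1 / 2) (s ^ n * γ / ω),
    ⟨lt_min (by norm_num) (by positivity),
      lt_of_le_of_lt (min_le_left _ _) (by norm_num)⟩, ?_⟩
  intro y hy r hr hrD
  set t := s * r with ht
  have htpos : 0 < t := mul_pos hs_pos hr
  have hrmax : r ≤ max D 1 := le_max_of_le_left hrD.le
  have htminhε : t ≤ min h ε := by
    have h1 : t ≤ min h ε / max D 1 * r :=
      mul_le_mul_of_nonneg_right (min_le_left _ _) hr.le
    have h2 : min h ε / max D 1 * r ≤ min h ε := by
      rw [div_mul_eq_mul_div, div_le_iff₀ hD1]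
      have := lt_min hh hε
      nlinarith
    linarith
  have hth : t ≤ h := htminhε.trans (min_le_left _ _)
  have htε : t ≤ ε := htminhε.trans (min_le_right _ _)
  have htr : (1 + a) * t ≤ r := by
    have h1 : t ≤ 1 / (1 + a) * r := mul_le_mul_of_nonneg_right hs_le hr.le
    have h2 : (1 + a) * (1 / (1 + a) * r) = r := by field_simp
    nlinarith
  have htr' : t ≤ r := by nlinarith
  have key : ENNReal.ofReal (t ^ n * γ) ≤ volume (U ∩ closedBall y r) := by
    by_cases hyV : y ∈ ⋃ i, V i
    · obtain ⟨i, hi⟩ := Set.mem_iUnion.1 hyV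
      have hsub : y +ᵥ t • coneSet (u i) a 1 ⊆ U ∩ closedBall y r := by
        rintro z ⟨x, hx, rfl⟩
        have hxt : x ∈ coneSet (u i) a t := smul_coneSet_subset _ htpos hx
        refine ⟨hcone i (Set.add_mem_add ⟨hy, hi⟩ (coneSet_mono _ hth hxt)), ?_⟩
        have hxn := coneSet_subset_closedBall _ (hV i).2.2 ha hxt
        simp only [mem_closedBall, dist_zero_right] at hxn
        have hd : dist (y +ᵥ x) y = ‖x‖ := by
          simp [vadd_eq_add, dist_eq_norm]
        rw [mem_closedBall, hd]
        linarith
      calc ENNReal.ofReal (t ^ n * γ)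
          ≤ ENNReal.ofReal (t ^ n) * ENNReal.ofReal cR := by
            rw [← ENNReal.ofReal_mul (by positivity)]
            exact ENNReal.ofReal_le_ofReal
              (mul_le_mul_of_nonneg_left (min_le_left _ _) (by positivity))
        _ ≤ ENNReal.ofReal (t ^ n) * volume (coneSet (u i) a 1) :=
            mul_le_mul_right (hcle i) _
        _ = volume (t • coneSet (u i) a 1) := by
            rw [Measure.addHaar_smul, finrank_euclideanSpace_fin,
              abs_of_pos (pow_pos htpos n)]
        _ = volume (y +ᵥ t • coneSet (u i) a 1) := (measure_vadd _ _ _).symm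
        _ ≤ volume (U ∩ closedBall y r) := measure_mono hsub
    · have hyK : y ∈ K := ⟨subset_closure hy, hyV⟩
      have hsub : ball y t ⊆ U ∩ closedBall y r := fun z hz =>
        ⟨hball y hyK (ball_subset_ball htε hz),
          (ball_subset_closedBall.trans (closedBall_subset_closedBall htr')) hz⟩
      calc ENNReal.ofReal (t ^ n * γ)
          ≤ ENNReal.ofReal (t ^ n) * ENNReal.ofReal ω := by
            rw [← ENNReal.ofReal_mul (by positivity)]
            exact ENNReal.ofReal_le_ofReal
              (mul_le_mul_of_nonneg_left (min_le_right _ _) (by positivity))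
        _ = ENNReal.ofReal (t ^ n) * volume (ball (0 : EuclideanSpace ℝ (Fin n)) 1) := by
            rw [hω, ENNReal.ofReal_toReal hω_ne]
        _ = volume (ball y t) := by
            rw [Measure.addHaar_ball volume y htpos.le, finrank_euclideanSpace_fin]
        _ ≤ volume (U ∩ closedBall y r) := measure_mono hsub
  refine le_trans (ENNReal.ofReal_le_ofReal ?_) key
  calc min (1 / 2) (s ^ n * γ / ω) * ω * r ^ n
      ≤ s ^ n * γ / ω * ω * r ^ n :=
        mul_le_mul_of_nonneg_right
          (mul_le_mul_of_nonneg_right (min_le_right _ _) hωR.le) (pow_nonneg hr.le n)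
    _ = s ^ n * γ * r ^ n := by field_simp
    _ = t ^ n * γ := by rw [ht, mul_pow]; ring
end

section
/- Let U ⊂ ℝ^n be open and bounded, satisfying the cone condition, or U = ℝ^n. For x ∈ U, r ∈ (0, diam U) and α ∈ (0,1), set W^x_{r,α} = {(w₁,…,w_n) ∈ (B(0,r))^n : x + wᵢ ∈ U for all i, and |w₁ ∧ … ∧ w_n| ≥ α·r^n}. Then there exist α̃ ∈ (0,1) and C = C(n,U) > 0 such that for all x ∈ U and all r ∈ (0, diam U), H^{n²}(W^x_{r,α̃}) ≥ C·r^{n²}. -/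
open MeasureTheory Metric Pointwise
open scoped RealInnerProductSpace

/-- `W^x_{r,α}`: tuples of `n` vectors `wᵢ` in the closed ball of radius `r` with
`x + wᵢ ∈ U` and `|w₁ ∧ … ∧ w_n| ≥ α·r^n`. -/
def WsetX {n : ℕ} (U : Set (EuclideanSpace ℝ (Fin n)))
    (x : EuclideanSpace ℝ (Fin n)) (r α : ℝ) : Set (Fin n → EuclideanSpace ℝ (Fin n)) :=
  {w | (∀ i, w i ∈ Metric.closedBall (0 : EuclideanSpace ℝ (Fin n)) r ∧ x + w i ∈ U) ∧
    α * r ^ n ≤ |(Matrix.of fun i j => w j i).det|}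

/-!
Both kinds of domain satisfy an interior corkscrew condition: for a fixed ratio `c > 0`, every
`x ∈ U` and scale `r` admit a ball `B(y, c r) ⊆ U ∩ B(x, r)`. For `ℝⁿ` this is trivial; for a cone
domain one takes `y = x` when `x` is far from `∂U` (relative to a Lebesgue number of the cover
`V i`), and otherwise puts the ball inside the cone attached at `x`.

Inside `B(y - x, c r)` one finds a frame `mᵢ = (y - x) ± t eᵢ` with `|det m| ≥ tⁿ` (matrix
determinant lemma, `t ≍ r`). The determinant is Lipschitz on bounded sets, so all tuples within
`η r` of `m` keep `|det| ≥ α rⁿ`; they form a product of `n` balls of volume `≍ (η r)ⁿ` each.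
-/

theorem norm_sub_inner_smul_le {F : Type*} [NormedAddCommGroup F] [InnerProductSpace ℝ F]
    {u : F} (hu : ‖u‖ = 1) (e : F) : ‖e - ⟪e, u⟫ • u‖ ≤ ‖e‖ := by
  have hsq : ‖e - ⟪e, u⟫ • u‖ ^ 2 = ‖e‖ ^ 2 - ⟪e, u⟫ ^ 2 := by
    rw [norm_sub_sq_real, real_inner_smul_right, norm_smul, hu, Real.norm_eq_abs, mul_one, sq_abs]
    ring
  exact pow_le_pow_iff_left₀ (norm_nonneg _) (norm_nonneg _) two_ne_zero |>.1
    (by nlinarith [sq_nonneg ⟪e, u⟫])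

/-- `dist y x + c * r ≤ r` says that the ball `B(y, c r) ⊆ U` also lies in `B(x, r)`. -/
def CorkscrewCondition {E : Type*} [PseudoMetricSpace E] (U : Set E) (c : ℝ) : Prop :=
  ∀ x ∈ U, ∀ r : ℝ, 0 < r → ENNReal.ofReal r < ediam U →
    ∃ y, closedBall y (c * r) ⊆ U ∧ dist y x + c * r ≤ r

theorem corkscrewCondition_univ {E : Type*} [PseudoMetricSpace E] :
    CorkscrewCondition (Set.univ : Set E) 1 :=
  fun x _ r _ _ => ⟨x, Set.subset_univ _, by simp⟩

theorem exists_mem_frontier_dist_le_of_not_closedBall_subset {E : Type*} [NormedAddCommGroup E]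
    [NormedSpace ℝ E] [FiniteDimensional ℝ E] {U : Set E} {x : E} {δ : ℝ} (hx : x ∈ U)
    (h : ¬ closedBall x δ ⊆ U) : ∃ q ∈ frontier U, dist x q ≤ δ := by
  obtain ⟨p, hp, hpU⟩ := Set.not_subset.1 h
  obtain ⟨q, hq, hxq⟩ := exists_mem_frontier_infDist_compl_eq_dist hx fun hU => hpU (hU ▸ trivial)
  exact ⟨q, hq, hxq ▸ (infDist_le_dist_of_mem hpU).trans (mem_closedBall'.1 hp)⟩

theorem min_one_div_mul_le_min {r D ε : ℝ} (hr : 0 ≤ r) (hrD : r ≤ D) (hε : 0 ≤ ε) :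
    min 1 (ε / (D + 1)) * r ≤ min r ε := by
  refine le_min (mul_le_of_le_one_left hr (min_le_left _ _)) ?_
  calc min 1 (ε / (D + 1)) * r ≤ ε / (D + 1) * (D + 1) :=
        mul_le_mul (min_le_right _ _) (by linarith) hr (div_nonneg hε (by linarith))
    _ = ε := div_mul_cancel₀ ε (by linarith)

section

variable {n : ℕ}

theorem closedBall_subset_coneSet {u : EuclideanSpace ℝ (Fin n)} (hu : ‖u‖ = 1)
    {a h t : ℝ} (ha : 0 < a) (ht : 0 < t) (hth : 2 * t ≤ h) :
    closedBall (t • u) (min a 1 * t / 4) ⊆ coneSet u a h := by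
  intro z hz
  set e := z - t • u
  have he : ‖e‖ ≤ min a 1 * t / 4 := by rwa [mem_closedBall, dist_eq_norm] at hz
  have he_le : ‖e‖ ≤ t / 4 ∧ ‖e‖ ≤ a * t / 4 := by
    constructor <;> refine he.trans ?_
    · nlinarith [min_le_right a 1]
    · nlinarith [min_le_left a 1]
  have hz : z = t • u + e := by simp [e]
  have hinner : ⟪z, u⟫ = t + ⟪e, u⟫ := by
    rw [hz, inner_add_left, real_inner_smul_left, real_inner_self_eq_norm_sq, hu]
    ring
  have heu : |⟪e, u⟫| ≤ ‖e‖ := by simpa [hu] using abs_real_inner_le_norm e u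
  have hperp : z - ⟪z, u⟫ • u = e - ⟪e, u⟫ • u := by
    rw [hinner, hz, add_smul]; abel
  obtain ⟨hlo, hhi⟩ := abs_le.1 heu
  refine ⟨by linarith, by linarith, ?_⟩
  rw [hperp]
  calc ‖e - ⟪e, u⟫ • u‖ ≤ ‖e‖ := norm_sub_inner_smul_le hu e
    _ < a * (3 * t / 4) := by nlinarith
    _ ≤ a * ⟪z, u⟫ := by gcongr; linarith

theorem closedBall_add_smul_subset_of_add_coneSet_subset {U V : Set (EuclideanSpace ℝ (Fin n))}
    {u : EuclideanSpace ℝ (Fin n)} {a h : ℝ} (hcone : (U ∩ V) + coneSet u a h ⊆ U) (hu : ‖u‖ = 1)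
    (ha : 0 < a) {x : EuclideanSpace ℝ (Fin n)} (hx : x ∈ U ∩ V) {t : ℝ} (ht : 0 < t)
    (hth : 2 * t ≤ h) : closedBall (x + t • u) (min a 1 * t / 4) ⊆ U := by
  rw [← singleton_add_closedBall]
  exact (Set.add_subset_add (Set.singleton_subset_iff.2 hx)
    (closedBall_subset_coneSet hu ha ht hth)).trans hcone

theorem ConeCondition.exists_corkscrewCondition {U : Set (EuclideanSpace ℝ (Fin n))}
    (hU : ConeCondition U) (hb : Bornology.IsBounded U) :
    ∃ c, 0 < c ∧ c ≤ 1 ∧ CorkscrewCondition U c := by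
  obtain ⟨a, h, ha, hh, m, V, u, hV, hcover, hcone⟩ := hU
  have hfr : IsCompact (frontier U) :=
    hb.isCompact_closure.of_isClosed_subset isClosed_frontier frontier_subset_closure
  obtain ⟨δ, hδ, hleb⟩ := lebesgue_number_lemma_of_metric hfr (fun i => (hV i).1) hcover
  set ε := min δ h
  set κ := min 1 (ε / (diam U + 1))
  have hκ1 : κ ≤ 1 := min_le_left _ _
  have ha1 : min a 1 ≤ 1 := min_le_right _ _
  have hε : 0 < ε := lt_min hδ hh
  -- the ratio is chosen so that `κ * r ≤ min r (min δ h)` for every `r ≤ diam U`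
  refine ⟨min a 1 * κ / 8, by positivity, by nlinarith [lt_min ha one_pos], ?_⟩
  intro x hx r hr hrd
  have hrD : r ≤ diam U := ((ENNReal.ofReal_lt_iff_lt_toReal hr.le hb.ediam_ne_top).1 hrd).le
  have hκr : κ * r ≤ min r ε := min_one_div_mul_le_min hr.le hrD hε.le
  have hr_le : min r ε ≤ r := min_le_left _ _
  have hε_le : min r ε ≤ ε := min_le_right _ _
  have hc : min a 1 * κ / 8 * r ≤ min a 1 * min r ε / 8 := by
    rw [div_mul_eq_mul_div, mul_assoc]; gcongr
  have hcr : min a 1 * min r ε / 8 ≤ r / 8 := by nlinarith [lt_min ha one_pos]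
  by_cases hball : closedBall x (δ / 2) ⊆ U
  · refine ⟨x, (closedBall_subset_closedBall ?_).trans hball, ?_⟩
    · nlinarith [min_le_left δ h, lt_min ha one_pos]
    · rw [dist_self]; linarith
  obtain ⟨q, hq, hxq⟩ := exists_mem_frontier_dist_le_of_not_closedBall_subset hx hball
  obtain ⟨i, hi⟩ := hleb q hq
  have hxV : x ∈ V i := hi (by rw [mem_ball]; linarith)
  set t := min r ε / 2 with ht_def
  have ht : 0 < t := by positivity
  refine ⟨x + t • u i, (closedBall_subset_closedBall ?_).trans
    (closedBall_add_smul_subset_of_add_coneSet_subset (hcone i) (hV i).2.2 ha ⟨hx, hxV⟩ ht ?_), ?_⟩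
  · rw [ht_def]; linarith
  · rw [ht_def]; linarith [min_le_right δ h]
  · rw [dist_eq_norm, add_sub_cancel_left, norm_smul, (hV i).2.2, Real.norm_of_nonneg ht.le,
      ht_def]
    linarith

end

theorem Matrix.det_diagonal_add_vecMulVec {ι K : Type*} [Fintype ι] [DecidableEq ι] [Field K]
    {d : ι → K} (hd : ∀ i, d i ≠ 0) (u v : ι → K) :
    (Matrix.diagonal d + Matrix.vecMulVec u v).det = (∏ i, d i) * (1 + ∑ i, v i * u i / d i) := by
  have hdet : IsUnit (Matrix.diagonal d).det := by
    simpa [Matrix.det_diagonal, Finset.prod_ne_zero_iff] using hd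
  have hinv : (Matrix.diagonal d)⁻¹ = Matrix.diagonal d⁻¹ := by
    refine Matrix.inv_eq_right_inv ?_
    simp [Matrix.diagonal_mul_diagonal, mul_inv_cancel₀ (hd _)]
  rw [Matrix.vecMulVec_eq Unit, Matrix.det_add_replicateCol_mul_replicateRow hdet,
    Matrix.det_diagonal, hinv, Matrix.det_unique]
  simp [Matrix.mul_apply, Matrix.diagonal_apply, div_eq_mul_inv, mul_assoc, mul_comm (d _)⁻¹]

section

variable {n : ℕ}

theorem EuclideanSpace.basisFun_det_apply (w : Fin n → EuclideanSpace ℝ (Fin n)) :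
    (EuclideanSpace.basisFun (Fin n) ℝ).toBasis.det w = (Matrix.of fun i j => w j i).det := by
  rw [Module.Basis.det_apply]
  rfl

noncomputable def continuousDet (n : ℕ) :
    EuclideanSpace ℝ (Fin n) [⋀^Fin n]→L[ℝ] ℝ :=
  { (EuclideanSpace.basisFun (Fin n) ℝ).toBasis.det with
    cont := by
      show Continuous fun w => (EuclideanSpace.basisFun (Fin n) ℝ).toBasis.det w
      simp only [EuclideanSpace.basisFun_det_apply]
      exact Continuous.matrix_det (by fun_prop) }

theorem continuousDet_apply (w : Fin n → EuclideanSpace ℝ (Fin n)) :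
    continuousDet n w = (Matrix.of fun i j => w j i).det :=
  EuclideanSpace.basisFun_det_apply w

theorem exists_frame_abs_continuousDet_ge (c : EuclideanSpace ℝ (Fin n)) {t : ℝ} (ht : 0 < t) :
    ∃ m : Fin n → EuclideanSpace ℝ (Fin n),
      (∀ i, dist (m i) c = t) ∧ t ^ n ≤ |continuousDet n m| := by
  -- signs chosen so that the rank-one correction `1 + ∑ c i / d i` of the determinant is `≥ 1`
  set d : Fin n → ℝ := fun i => if 0 ≤ c i then t else -t
  have hd_abs (i : Fin n) : |d i| = t := by
    simp only [d]; split_ifs <;> simp [abs_of_pos ht]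
  have hd_ne (i : Fin n) : d i ≠ 0 := fun h => ht.ne' (by rw [← hd_abs i, h, abs_zero])
  have hcd (i : Fin n) : c i / d i = |c i| / t := by
    simp only [d]; split_ifs with h
    · rw [abs_of_nonneg h]
    · rw [abs_of_neg (not_le.1 h), div_neg, neg_div]
  refine ⟨fun i => c + d i • EuclideanSpace.single i 1, fun i => ?_, ?_⟩
  · simp [dist_eq_norm, norm_smul, hd_abs]
  have hmat : (Matrix.of fun i j => (c + d j • EuclideanSpace.single j (1 : ℝ)) i) =
      Matrix.diagonal d + Matrix.vecMulVec (fun i => c i) 1 := by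
    ext i j
    by_cases h : i = j
    · subst h; simp [add_comm]
    · simp [h, Matrix.vecMulVec]
  have hsum : 1 ≤ |1 + ∑ i, (1 : Fin n → ℝ) i * c i / d i| := by
    simp only [Pi.one_apply, one_mul, hcd]
    have : 0 ≤ ∑ i, |c i| / t := Finset.sum_nonneg fun i _ => by positivity
    rw [abs_of_nonneg (by linarith)]
    linarith
  rw [continuousDet_apply, hmat, Matrix.det_diagonal_add_vecMulVec hd_ne, abs_mul, Finset.abs_prod]
  simp only [hd_abs, Finset.prod_const, Finset.card_univ, Fintype.card_fin]
  exact le_mul_of_one_le_right (by positivity) hsum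

theorem le_abs_continuousDet_of_norm_sub_le {w m : Fin n → EuclideanSpace ℝ (Fin n)}
    {r s η : ℝ} (hr : 0 ≤ r) (hw : ‖w‖ ≤ r) (hm : ‖m‖ ≤ r) (hwm : ‖w - m‖ ≤ η * r)
    (hdet : (s * r) ^ n ≤ |continuousDet n m|) :
    (s ^ n - ‖continuousDet n‖ * n * η) * r ^ n ≤ |continuousDet n w| := by
  have hpow : (n : ℝ) * r ^ (n - 1) * r = n * r ^ n := by
    cases n <;> simp [pow_succ, mul_assoc]
  have hpert : |continuousDet n w - continuousDet n m| ≤ ‖continuousDet n‖ * n * η * r ^ n :=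
    calc |continuousDet n w - continuousDet n m|
        ≤ ‖continuousDet n‖ * n * max ‖w‖ ‖m‖ ^ (n - 1) * ‖w - m‖ := by
          simpa using (continuousDet n).norm_image_sub_le w m
      _ ≤ ‖continuousDet n‖ * n * r ^ (n - 1) * (η * r) := by
          gcongr
          exact max_le hw hm
      _ = ‖continuousDet n‖ * n * η * r ^ n := by
          linear_combination ‖continuousDet n‖ * η * hpow
  rw [mul_pow] at hdet
  linarith [abs_sub_abs_le_abs_sub (continuousDet n m) (continuousDet n w),
    abs_sub_comm (continuousDet n m) (continuousDet n w)]

theorem volume_closedBall_pi_euclideanSpace {k : ℕ} (m : Fin k → EuclideanSpace ℝ (Fin n))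
    {ρ : ℝ} (hρ : 0 ≤ ρ) :
    volume (closedBall m ρ) =
      ENNReal.ofReal ((ρ ^ n * (volume (ball (0 : EuclideanSpace ℝ (Fin n)) 1)).toReal) ^ k) := by
  rw [volume_pi_closedBall _ hρ, ENNReal.ofReal_pow (by positivity),
    ENNReal.ofReal_mul (by positivity), ENNReal.ofReal_toReal measure_ball_lt_top.ne]
  simp [Measure.addHaar_closedBall _ _ hρ]

theorem mem_WsetX_of_mem_closedBall {U : Set (EuclideanSpace ℝ (Fin n))}
    {x y : EuclideanSpace ℝ (Fin n)} {r ρ α : ℝ} {w : Fin n → EuclideanSpace ℝ (Fin n)}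
    (hU : closedBall y ρ ⊆ U) (hyx : dist y x + ρ ≤ r) (hw : ∀ i, w i ∈ closedBall (y - x) ρ)
    (hdet : α * r ^ n ≤ |continuousDet n w|) : w ∈ WsetX U x r α := by
  refine ⟨fun i => ⟨?_, hU ?_⟩, by rwa [continuousDet_apply] at hdet⟩
  · have := norm_le_of_mem_closedBall (hw i)
    rw [mem_closedBall_zero_iff]
    rw [dist_eq_norm] at hyx
    linarith
  · have h := mem_closedBall.1 (hw i)
    rwa [mem_closedBall, dist_eq_norm, show x + w i - y = w i - (y - x) by abel, ← dist_eq_norm]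

theorem exists_volume_WsetX_ge_of_closedBall_subset {c : ℝ} (hc : 0 < c) (hc1 : c ≤ 1) :
    ∃ α ∈ Set.Ioo (0 : ℝ) 1, ∃ C : ℝ, 0 < C ∧
      ∀ (U : Set (EuclideanSpace ℝ (Fin n))) (x y : EuclideanSpace ℝ (Fin n)) (r : ℝ), 0 < r →
        closedBall y (c * r) ⊆ U → dist y x + c * r ≤ r →
        ENNReal.ofReal (C * r ^ (n ^ 2)) ≤ volume (WsetX U x r α) := by
  set s := c / 2 with hs_def
  set L := ‖continuousDet n‖
  set η := min s (s ^ n / (2 * (L * n + 1)))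
  set B := (volume (ball (0 : EuclideanSpace ℝ (Fin n)) 1)).toReal with hB_def
  have hs : 0 < s := by positivity
  have hsn : s ^ n ≤ 1 := pow_le_one₀ hs.le (by linarith)
  have hη : 0 < η := by positivity
  have hLη : L * n * η ≤ s ^ n / 2 := by
    have hη' : η ≤ s ^ n / (2 * (L * n + 1)) := min_le_right _ _
    rw [le_div_iff₀ (by positivity)] at hη'
    nlinarith [norm_nonneg (continuousDet n)]
  have hB : 0 < B := ENNReal.toReal_pos (measure_ball_pos _ _ one_pos).ne' measure_ball_lt_top.ne
  refine ⟨s ^ n / 2, ⟨by positivity, by linarith⟩, (η ^ n * B) ^ n, by positivity, ?_⟩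
  intro U x y r hr hU hyx
  obtain ⟨m, hm, hdet⟩ := exists_frame_abs_continuousDet_ge (y - x) (mul_pos hs hr)
  have hnorm : ∀ v ∈ closedBall (y - x) (c * r), ‖v‖ ≤ r := fun v hv => by
    have := norm_le_of_mem_closedBall hv
    rw [dist_eq_norm] at hyx
    linarith
  have hsr : η * r ≤ s * r ∧ 0 < s * r ∧ c * r = 2 * (s * r) :=
    ⟨by gcongr; exact min_le_left _ _, mul_pos hs hr, by rw [hs_def]; ring⟩
  have hmc (i : Fin n) : m i ∈ closedBall (y - x) (c * r) := by
    rw [mem_closedBall, hm i]; linarith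
  have hsub : closedBall m (η * r) ⊆ WsetX U x r (s ^ n / 2) := by
    intro w hw
    have hwc (i : Fin n) : w i ∈ closedBall (y - x) (c * r) := by
      rw [mem_closedBall]
      linarith [dist_triangle (w i) (m i) (y - x), (dist_le_pi_dist w m i).trans hw, hm i]
    refine mem_WsetX_of_mem_closedBall hU hyx hwc ?_
    have hw_norm : ‖w‖ ≤ r := (pi_norm_le_iff_of_nonneg hr.le).2 fun i => hnorm _ (hwc i)
    have hm_norm : ‖m‖ ≤ r := (pi_norm_le_iff_of_nonneg hr.le).2 fun i => hnorm _ (hmc i)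
    have hwm : ‖w - m‖ ≤ η * r := by rwa [mem_closedBall, dist_eq_norm] at hw
    refine le_trans ?_ (le_abs_continuousDet_of_norm_sub_le hr.le hw_norm hm_norm hwm hdet)
    gcongr
    linarith
  calc ENNReal.ofReal ((η ^ n * B) ^ n * r ^ (n ^ 2))
      = volume (closedBall m (η * r)) := by
        rw [volume_closedBall_pi_euclideanSpace m (by positivity), ← hB_def, sq, pow_mul]
        ring_nf
    _ ≤ volume (WsetX U x r (s ^ n / 2)) := measure_mono hsub

end

/-- For `U` open bounded with the cone condition, or `U = ℝ^n`, there are `α̃ ∈ (0,1)`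
and `C > 0` with `H^{n²}(W^x_{r,α̃}) ≥ C·r^{n²}` for all `x ∈ U`, `0 < r < diam U`. -/
theorem volume_WsetX_ge {n : ℕ} (U : Set (EuclideanSpace ℝ (Fin n)))
    (hU : (IsOpen U ∧ Bornology.IsBounded U ∧ ConeCondition U) ∨ U = Set.univ) :
    ∃ α' : ℝ, α' ∈ Set.Ioo (0 : ℝ) 1 ∧ ∃ C : ℝ, 0 < C ∧
      ∀ x ∈ U, ∀ r : ℝ, 0 < r → ENNReal.ofReal r < EMetric.diam U →
        ENNReal.ofReal (C * r ^ (n ^ 2)) ≤ volume (WsetX U x r α') := by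
  obtain ⟨c, hc, hc1, hcork⟩ : ∃ c, 0 < c ∧ c ≤ 1 ∧ CorkscrewCondition U c := by
    rcases hU with ⟨-, hb, hcone⟩ | rfl
    · exact hcone.exists_corkscrewCondition hb
    · exact ⟨1, one_pos, le_rfl, corkscrewCondition_univ⟩
  obtain ⟨α, hα, C, hC, hW⟩ := exists_volume_WsetX_ge_of_closedBall_subset (n := n) hc hc1
  refine ⟨α, hα, C, hC, fun x hx r hr hrd => ?_⟩
  obtain ⟨y, hyU, hyx⟩ := hcork x hx r hr hrd
  exact hW U x y r hr hyU hyx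
end
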